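/- arXiv:2205.07064 — 2 statements merged into one kernel-verified Lean document; each statement's English description precedes it below -/
import Mathlib

section
/- Let S be a local good semigroup and let K be a canonical semigroup ideal of S. Then Δ̄(τ_K) ∖ Δ(τ_K) ⊆ K. -/
/-! Combinatorics of good semigroups in `ℤ^I` (value semigroups of curve
singularities), following Korell–Schulze–Tozzo. -/

section GoodSemigroups

variable {I : Type*} [Fintype I] [Nonempty I]

/-- Property (E0): `E` contains a translate of `ℕ^I`, i.e. an upper cone. -/
def propE0 (E : Set (I → ℤ)) : Prop :=
  ∃ α : I → ℤ, ∀ β : I → ℤ, α ≤ β → β ∈ E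

/-- Property (E1): closure under componentwise minima. -/
def propE1 (E : Set (I → ℤ)) : Prop :=
  ∀ α ∈ E, ∀ β ∈ E, (fun i => min (α i) (β i)) ∈ E

/-- Property (E2). -/
def propE2 (E : Set (I → ℤ)) : Prop :=
  ∀ α ∈ E, ∀ β ∈ E, ∀ j : I, α j = β j →
    ∃ ε ∈ E, α j < ε j ∧
      ∀ i : I, min (α i) (β i) ≤ ε i ∧ (α i ≠ β i → ε i = min (α i) (β i))

/-- A good semigroup: a submonoid of `ℤ^I` whose unique minimal element is `0`
(equivalently all elements are `≥ 0`) satisfying (E0), (E1) and (E2). -/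
def IsGoodSemigroup (S : Set (I → ℤ)) : Prop :=
  (0 : I → ℤ) ∈ S ∧ (∀ α ∈ S, ∀ β ∈ S, α + β ∈ S) ∧ (∀ α ∈ S, 0 ≤ α) ∧
    propE0 S ∧ propE1 S ∧ propE2 S

/-- The difference `E − F = {α : α + F ⊆ E}`. -/
def sgDiff (E F : Set (I → ℤ)) : Set (I → ℤ) :=
  {α | ∀ β ∈ F, α + β ∈ E}

/-- A semigroup ideal of a good semigroup `S`. -/
def IsSgIdeal (S E : Set (I → ℤ)) : Prop :=
  E.Nonempty ∧ (∀ α ∈ E, ∀ β ∈ S, α + β ∈ E) ∧ ∃ α ∈ S, ∀ β ∈ E, α + β ∈ S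

/-- A good semigroup ideal of `S`: a semigroup ideal satisfying (E1) and (E2). -/
def IsGoodIdeal (S E : Set (I → ℤ)) : Prop :=
  IsSgIdeal S E ∧ propE1 E ∧ propE2 E

/-- The (componentwise) minimal element `μ_E` of a good semigroup ideal. -/
noncomputable def sgMu (E : Set (I → ℤ)) : I → ℤ :=
  fun i => sInf {n : ℤ | ∃ α ∈ E, α i = n}

/-- The conductor ideal `C_E = E − ℕ^I`. -/
def sgCond (E : Set (I → ℤ)) : Set (I → ℤ) :=
  sgDiff E {β | 0 ≤ β}

/-- The conductor `γ_E = μ_{C_E} = inf {α : α + ℕ^I ⊆ E}`. -/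
noncomputable def sgGamma (E : Set (I → ℤ)) : I → ℤ :=
  sgMu (sgCond E)

/-- `τ_E = γ_E − 1`. -/
noncomputable def sgTau (E : Set (I → ℤ)) : I → ℤ :=
  sgGamma E - 1

/-- `Δ(α) = ⋃ i Δ_i(α)` where `Δ_i(α) = {β : β i = α i, β j > α j (j ≠ i)}`. -/
def sgDelta (α : I → ℤ) : Set (I → ℤ) :=
  ⋃ i : I, {β | β i = α i ∧ ∀ j : I, j ≠ i → α j < β j}

/-- The closed version `Δ̄(α)`. -/
def sgDeltaBar (α : I → ℤ) : Set (I → ℤ) :=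
  ⋃ i : I, {β | β i = α i ∧ ∀ j : I, j ≠ i → α j ≤ β j}

/-- A canonical ideal of `S`: a good semigroup ideal `K` such that any good
semigroup ideal `E` with `γ_E = γ_K` containing `K` equals `K`. -/
def IsCanonicalIdeal (S K : Set (I → ℤ)) : Prop :=
  IsGoodIdeal S K ∧
    ∀ E : Set (I → ℤ), IsGoodIdeal S E → sgGamma E = sgGamma K → K ⊆ E → E = K

/-- The normalized canonical ideal `K_S^0`. -/
noncomputable def sgK0 (S : Set (I → ℤ)) : Set (I → ℤ) :=
  {α | sgDelta (sgTau S - α) ∩ S = ∅}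

/-- A good semigroup is symmetric if it is a canonical ideal of itself. -/
def IsSymmetricSg (S : Set (I → ℤ)) : Prop :=
  IsGoodSemigroup S ∧ IsCanonicalIdeal S S

/-- A good semigroup is local if `0` is its only element with a zero coordinate. -/
def IsLocalSg (S : Set (I → ℤ)) : Prop :=
  ∀ α ∈ S, (∃ i : I, α i = 0) → α = 0

/-- A good semigroup ideal `E` is stable if `μ_E + (E − E) = E`. -/
noncomputable def IsStableSgIdeal (E : Set (I → ℤ)) : Prop :=
  (fun β => sgMu E + β) '' sgDiff E E = E

end GoodSemigroups

set_option linter.unusedSectionVars false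


section StmtFiveAux

variable {I : Type*} [Fintype I] [Nonempty I]

/-- Property (E2). -/
def propE2' (E : Set (I → ℤ)) : Prop :=
  ∀ α ∈ E, ∀ β ∈ E, ∀ j : I, α j = β j →
    ∃ ε ∈ E, α j < ε j ∧
      ∀ i : I, min (α i) (β i) ≤ ε i ∧ (α i ≠ β i → ε i = min (α i) (β i))

/-- The dual-canonical candidate set. -/
def K0set (S : Set (I → ℤ)) (t : I → ℤ) : Set (I → ℤ) :=
  {a | ∀ ξ ∈ S, ∀ i : I, ξ i = t i - a i → ∃ l, l ≠ i ∧ ξ l ≤ t l - a l}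

lemma pi_zero_le_apply {x : I → ℤ} (h : (0 : I → ℤ) ≤ x) (i : I) : (0 : ℤ) ≤ x i :=
  h i

/-- climbing: raise one coordinate of an element of `K` (whose coordinate is
at conductor level) arbitrarily, keeping all other coordinates fixed. -/
lemma climb_lemma (K : Set (I → ℤ)) (hE2 : propE2' K) (γ : I → ℤ)
    (hcone : ∀ δ : I → ℤ, (∀ i, γ i ≤ δ i) → δ ∈ K) :
    ∀ n : ℕ, ∀ z ∈ K, ∀ q : I, γ q ≤ z q → ∀ T : ℤ, (T - z q).toNat ≤ n →
      ∃ z' ∈ K, (∀ i, i ≠ q → z' i = z i) ∧ T ≤ z' q ∧ γ q ≤ z' q := by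
  classical
  intro n
  induction n with
  | zero =>
    intro z hz q hq T hT
    refine ⟨z, hz, fun i _ => rfl, ?_, hq⟩
    omega
  | succ n ih =>
    intro z hz q hq T hT
    by_cases hle : T ≤ z q
    · exact ⟨z, hz, fun i _ => rfl, hle, hq⟩
    · set w : I → ℤ := fun i => if i = q then z q else max (z i + 1) (γ i) with hw
      have hwK : w ∈ K := by
        apply hcone
        intro i
        by_cases h : i = q
        · subst h; simp [hw, hq]
        · simp [hw, h]
      have hwq : z q = w q := by simp [hw]
      obtain ⟨ε, hεK, hεq, hεpin⟩ := hE2 z hz w hwK q hwq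
      have hεi : ∀ i, i ≠ q → ε i = z i := by
        intro i hi
        have hne : z i ≠ w i := by
          have : w i = max (z i + 1) (γ i) := by simp [hw, hi]
          rw [this]
          have : z i + 1 ≤ max (z i + 1) (γ i) := le_max_left _ _
          omega
        have := (hεpin i).2 hne
        rw [this]
        have : w i = max (z i + 1) (γ i) := by simp [hw, hi]
        rw [this]
        have h1 : z i ≤ max (z i + 1) (γ i) := le_trans (by omega) (le_max_left _ _)
        exact min_eq_left h1
      have hεγ : γ q ≤ ε q := le_trans hq (le_of_lt hεq)
      have hmeas : (T - ε q).toNat ≤ n := by omega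
      obtain ⟨z', hz'K, hz'i, hz'T, hz'γ⟩ := ih ε hεK q hεγ T hmeas
      exact ⟨z', hz'K, fun i hi => (hz'i i hi).trans (hεi i hi), hz'T, hz'γ⟩

/-- multi-coordinate climbing keeping coordinate `l` fixed. -/
lemma multiclimb_lemma (K : Set (I → ℤ)) (hE2 : propE2' K) (γ : I → ℤ)
    (hcone : ∀ δ : I → ℤ, (∀ i, γ i ≤ δ i) → δ ∈ K) (l : I) :
    ∀ F : Finset I, ∀ z ∈ K, (∀ i, i ≠ l → γ i ≤ z i) → ∀ η : I → ℤ,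
      ∃ z' ∈ K, z' l = z l ∧ (∀ i, i ≠ l → γ i ≤ z' i) ∧
        ∀ i ∈ F, i ≠ l → η i ≤ z' i := by
  classical
  intro F
  induction F using Finset.induction_on with
  | empty =>
    intro z hz hγz η
    exact ⟨z, hz, rfl, hγz, by simp⟩
  | @insert a F ha ih =>
    intro z hz hγz η
    obtain ⟨z'', hz''K, hz''l, hz''γ, hz''F⟩ := ih z hz hγz η
    by_cases hal : a = l
    · refine ⟨z'', hz''K, hz''l, hz''γ, ?_⟩
      intro i hi hil
      rcases Finset.mem_insert.mp hi with h | h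
      · exact absurd (h.trans hal) hil
      · exact hz''F i h hil
    · obtain ⟨z3, hz3K, hz3i, hz3T, hz3γ⟩ :=
        climb_lemma K hE2 γ hcone (max (η a) (z'' a) - z'' a).toNat z'' hz''K a
          (hz''γ a hal) (max (η a) (z'' a)) le_rfl
      refine ⟨z3, hz3K, ?_, ?_, ?_⟩
      · rw [hz3i l (fun h => hal h.symm)]; exact hz''l
      · intro i hi
        by_cases hia : i = a
        · subst hia
          exact hz3γ
        · rw [hz3i i hia]; exact hz''γ i hi
      · intro i hi hil
        rcases Finset.mem_insert.mp hi with h | h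
        · subst h
          exact le_trans (le_max_left _ _) hz3T
        · rw [hz3i i (fun hh => ha (hh ▸ h))]
          exact hz''F i h hil

/-- the "valid" predicate: every `D`-tight hit is dodged by `c` on an agreement coord. -/
def ValidP (S : Set (I → ℤ)) (α β M c : I → ℤ) : Prop :=
  ∀ ξ ∈ S, ∀ k : I, α k ≠ β k → ξ k = M k →
    (∀ l, α l ≠ β l → l ≠ k → M l < ξ l) → ∃ l, α l = β l ∧ ξ l ≤ c l

/-- the "clean" predicate: no spoiler sits exactly at a level of `c`. -/
def CleanP (S : Set (I → ℤ)) (α β M c : I → ℤ) : Prop :=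
  ∀ ξ ∈ S, ∀ a : I, α a = β a → ξ a = c a →
    (∀ l, α l ≠ β l → M l < ξ l) →
    (∀ l, α l = β l → l ≠ a → c l < ξ l) → False

lemma descend_lemma (S : Set (I → ℤ)) (α β M : I → ℤ)
    (hSnn : ∀ x ∈ S, (0 : I → ℤ) ≤ x) (hSE2 : propE2' S) :
    ∀ n : ℕ, ∀ c : I → ℤ, ValidP S α β M c → (∑ i, (c i + 1).toNat) ≤ n →
      ∃ c', ValidP S α β M c' ∧ CleanP S α β M c' ∧ (∀ i, c' i ≤ c i) ∧
        (∀ i, α i ≠ β i → c' i = c i) := by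
  classical
  intro n
  induction n with
  | zero =>
    intro c hval hm
    by_cases hcl : CleanP S α β M c
    · exact ⟨c, hval, hcl, fun i => le_rfl, fun i _ => rfl⟩
    · exfalso
      unfold CleanP at hcl
      push_neg at hcl
      obtain ⟨η, hη, a, haeq, hηa, hηD, hηLOW, -⟩ := hcl
      have h0a : (0 : ℤ) ≤ c a := by
        have := hSnn η hη a
        simpa [hηa] using this
      have h1 : 1 ≤ (c a + 1).toNat := by omega
      have h2 : (c a + 1).toNat ≤ ∑ i, (c i + 1).toNat :=
        Finset.single_le_sum (f := fun i => (c i + 1).toNat)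
          (fun i _ => Nat.zero_le _) (Finset.mem_univ a)
      omega
  | succ n ih =>
    intro c hval hm
    by_cases hcl : CleanP S α β M c
    · exact ⟨c, hval, hcl, fun i => le_rfl, fun i _ => rfl⟩
    · unfold CleanP at hcl
      push_neg at hcl
      obtain ⟨η, hη, a, haeq, hηa, hηD, hηLOW, -⟩ := hcl
      have h0a : (0 : ℤ) ≤ c a := by
        have := hSnn η hη a
        simpa [hηa] using this
      set c' : I → ℤ := Function.update c a (c a - 1) with hc'
      have hc'a : c' a = c a - 1 := by simp [hc']
      have hc'ne : ∀ i, i ≠ a → c' i = c i := by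
        intro i hi; simp [hc', Function.update_of_ne hi]
      -- validity of c'
      have hval' : ValidP S α β M c' := by
        intro ξ hξ k hkD hkM hkstrict
        by_cases hd : ∃ l, α l = β l ∧ ξ l ≤ c' l
        · exact hd
        · exfalso
          push_neg at hd
          obtain ⟨l₀, hl₀eq, hl₀le⟩ := hval ξ hξ k hkD hkM hkstrict
          have hla : l₀ = a := by
            by_contra hne
            have h := hd l₀ hl₀eq
            rw [hc'ne l₀ hne] at h
            omega
          rw [hla] at hl₀le
          have hξa : ξ a = c a := by
            have h := hd a haeq
            rw [hc'a] at h
            omega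
          -- apply E2 of S to ξ and the spoiler η at coordinate a
          have hae : ξ a = η a := by rw [hξa, hηa]
          obtain ⟨e, heS, hea, hepin⟩ := hSE2 ξ hξ η hη a hae
          have heM : e k = M k := by
            have hne : ξ k ≠ η k := by
              rw [hkM]
              exact ne_of_lt (hηD k hkD)
            have h1 := (hepin k).2 hne
            rw [h1, hkM]
            exact min_eq_left (le_of_lt (hηD k hkD))
          have hestrict : ∀ l, α l ≠ β l → l ≠ k → M l < e l := by
            intro l hlD hlk
            exact lt_of_lt_of_le (lt_min (hkstrict l hlD hlk) (hηD l hlD)) (hepin l).1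
          obtain ⟨l₁, hl₁eq, hl₁le⟩ := hval e heS k hkD heM hestrict
          by_cases hl₁a : l₁ = a
          · rw [hl₁a] at hl₁le
            omega
          · have h1 : c l₁ < ξ l₁ := by
              have h := hd l₁ hl₁eq
              rw [hc'ne l₁ hl₁a] at h
              omega
            have h2 : c l₁ < η l₁ := hηLOW l₁ hl₁eq hl₁a
            have h3 : c l₁ < e l₁ := lt_of_lt_of_le (lt_min h1 h2) (hepin l₁).1
            omega
      have hmeas' : (∑ i, (c' i + 1).toNat) ≤ n := by
        have hlt : (∑ i, (c' i + 1).toNat) < ∑ i, (c i + 1).toNat := by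
          apply Finset.sum_lt_sum
          · intro i _
            by_cases hi : i = a
            · subst hi; rw [hc'a]; omega
            · rw [hc'ne i hi]
          · refine ⟨a, Finset.mem_univ a, ?_⟩
            rw [hc'a]; omega
        omega
      obtain ⟨c'', hv'', hc'', hle'', hD''⟩ := ih c' hval' hmeas'
      refine ⟨c'', hv'', hc'', ?_, ?_⟩
      · intro i
        refine le_trans (hle'' i) ?_
        by_cases hi : i = a
        · subst hi; rw [hc'a]; omega
        · rw [hc'ne i hi]
      · intro i hiD
        have hia : i ≠ a := by
          intro h; subst h; exact hiD haeq
        rw [hD'' i hiD, hc'ne i hia]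

def CondSet (K : Set (I → ℤ)) : Set (I → ℤ) :=
  {δ | ∀ ν : I → ℤ, (0 : I → ℤ) ≤ ν → δ + ν ∈ K}

def propE1' (E : Set (I → ℤ)) : Prop :=
  ∀ α ∈ E, ∀ β ∈ E, (fun i => min (α i) (β i)) ∈ E

lemma lemmaA (K : Set (I → ℤ)) (hE1 : propE1' K) (hE2 : propE2' K) (γ : I → ℤ)
    (hγle : ∀ δ ∈ CondSet K, ∀ i, γ i ≤ δ i)
    (hcone : ∀ δ : I → ℤ, (∀ i, γ i ≤ δ i) → δ ∈ K) :
    ∀ z ∈ K, ∀ l : I, z l = γ l - 1 → ¬(∀ i, i ≠ l → γ i ≤ z i) := by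
  classical
  intro z hz l hzl hstrict
  set δ' : I → ℤ := fun i => if i = l then γ l - 1 else γ i with hδ'
  have hδ'C : δ' ∈ CondSet K := by
    intro ν hν
    have hν' : ∀ i, 0 ≤ ν i := fun i => by
      have := hν i
      simpa using this
    set η : I → ℤ := δ' + ν with hη
    have hηapp : ∀ i, η i = δ' i + ν i := fun i => rfl
    have hηge : ∀ i, i ≠ l → γ i ≤ η i := by
      intro i hi
      rw [hηapp i]
      have : δ' i = γ i := by simp [hδ', hi]
      rw [this]
      linarith [hν' i]
    have hηl : γ l - 1 ≤ η l := by
      rw [hηapp l]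
      have : δ' l = γ l - 1 := by simp [hδ']
      rw [this]
      linarith [hν' l]
    by_cases hcase : γ l ≤ η l
    · refine hcone η (fun i => ?_)
      by_cases h : i = l
      · subst h; exact hcase
      · exact hηge i h
    · have hηl2 : η l = γ l - 1 := by omega
      obtain ⟨z', hz'K, hz'l, hz'γ, hz'F⟩ :=
        multiclimb_lemma K hE2 γ hcone l Finset.univ z hz hstrict η
      set w : I → ℤ := fun i => if i = l then γ l else max (η i) (γ i) with hw
      have hwK : w ∈ K := by
        refine hcone w (fun i => ?_)
        by_cases h : i = l
        · simp [hw, h]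
        · simp [hw, h]
      have hkey : η = fun i => min (z' i) (w i) := by
        funext i
        by_cases h : i = l
        · subst h
          have h1 : w i = γ i := by simp [hw]
          have h2 : z' i = γ i - 1 := by rw [hz'l, hzl]
          rw [h1, h2, hηl2]
          omega
        · have h1 : w i = η i := by
            have : max (η i) (γ i) = η i := max_eq_left (hηge i h)
            simp [hw, h, this]
          have h2 : η i ≤ z' i := hz'F i (Finset.mem_univ i) h
          rw [h1]
          exact (min_eq_right h2).symm
      rw [hkey]
      exact hE1 z' hz'K w hwK
  have h := hγle δ' hδ'C l
  have : δ' l = γ l - 1 := by simp [hδ']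
  omega

lemma k0_plus (S : Set (I → ℤ)) (t : I → ℤ)
    (hSadd : ∀ a ∈ S, ∀ b ∈ S, a + b ∈ S) :
    ∀ a ∈ K0set S t, ∀ s ∈ S, a + s ∈ K0set S t := by
  intro a ha s hs ξ hξ i hi
  have h2 : ξ + s ∈ S := hSadd ξ hξ s hs
  have h4 : (a + s) i = a i + s i := rfl
  have h3 : (ξ + s) i = t i - a i := by
    have h5 : (ξ + s) i = ξ i + s i := rfl
    rw [h5, hi, h4]
    ring
  obtain ⟨l, hl, hle⟩ := ha (ξ + s) h2 i h3
  refine ⟨l, hl, ?_⟩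
  have h6 : (ξ + s) l = ξ l + s l := rfl
  have h7 : (a + s) l = a l + s l := rfl
  rw [h6] at hle
  rw [h7]
  omega

lemma k0_E1 (S : Set (I → ℤ)) (t : I → ℤ) :
    propE1' (K0set S t) := by
  intro a ha b hb ξ hξ i hi
  have hred : ∀ l, (fun i => min (a i) (b i)) l = min (a l) (b l) := fun l => rfl
  rw [hred i] at hi
  rcases le_total (a i) (b i) with h | h
  · obtain ⟨l, hl, hle⟩ := ha ξ hξ i (by rw [hi, min_eq_left h])
    refine ⟨l, hl, ?_⟩
    rw [hred l]
    have := min_le_left (a l) (b l)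
    omega
  · obtain ⟨l, hl, hle⟩ := hb ξ hξ i (by rw [hi, min_eq_right h])
    refine ⟨l, hl, ?_⟩
    rw [hred l]
    have := min_le_right (a l) (b l)
    omega

lemma k0_E2 (S : Set (I → ℤ)) (t : I → ℤ)
    (hSnn : ∀ x ∈ S, (0 : I → ℤ) ≤ x) (hSE2 : propE2' S) :
    propE2' (K0set S t) := by
  classical
  intro α hα β hβ j hj
  set m : I → ℤ := fun i => min (α i) (β i) with hm
  set M : I → ℤ := fun i => t i - m i with hMdef
  have hMi : ∀ i, M i = t i - min (α i) (β i) := fun i => rfl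
  set c0 : I → ℤ := fun i => if i = j then M j - 1 else M i with hc0
  -- initial validity
  have hval0 : ValidP S α β M c0 := by
    intro ξ hξ k hkD hkM hkstrict
    by_contra hno
    push_neg at hno
    have hj1 : M j - 1 < ξ j := by
      have h := hno j hj
      have : c0 j = M j - 1 := by simp [hc0]
      omega
    have hLOW : ∀ l, α l = β l → l ≠ j → M l < ξ l := by
      intro l hl hlj
      have h := hno l hl
      have : c0 l = M l := by simp [hc0, hlj]
      omega
    by_cases hgt : M j < ξ j
    · -- use the min-attainer θ at k
      have hθ1 : ∃ θ, θ ∈ K0set S t ∧ θ k = min (α k) (β k) ∧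
          (∀ l, min (α l) (β l) ≤ θ l) ∧ (∀ l, α l = β l → θ l = min (α l) (β l)) := by
        rcases le_total (α k) (β k) with h | h
        · exact ⟨α, hα, (min_eq_left h).symm, fun l => min_le_left _ _,
            fun l hl => by rw [hl, min_self]⟩
        · exact ⟨β, hβ, (min_eq_right h).symm, fun l => min_le_right _ _,
            fun l hl => by rw [hl, min_self]⟩
      obtain ⟨θ, hθK, hθk, hθge, hθag⟩ := hθ1
      have hξk' : ξ k = t k - θ k := by
        rw [hkM, hMi k, hθk]
      obtain ⟨l, hlk, hlle⟩ := hθK ξ hξ k hξk'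
      have hlM : ξ l ≤ M l := by
        have h1 := hθge l
        have h2 := hMi l
        omega
      by_cases hlD : α l = β l
      · by_cases hlj : l = j
        · subst hlj; omega
        · exact absurd hlM (not_le.mpr (hLOW l hlD hlj))
      · exact absurd hlM (not_le.mpr (hkstrict l hlD hlk))
    · have hξj : ξ j = M j := by omega
      have hθ2 : ∃ θ, θ ∈ K0set S t ∧ min (α k) (β k) < θ k ∧
          (∀ l, min (α l) (β l) ≤ θ l) ∧ (∀ l, α l = β l → θ l = min (α l) (β l)) := by
        rcases le_total (α k) (β k) with h | h
        · refine ⟨β, hβ, ?_, fun l => min_le_right _ _,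
            fun l hl => by rw [hl, min_self]⟩
          rw [min_eq_left h]; exact lt_of_le_of_ne h hkD
        · refine ⟨α, hα, ?_, fun l => min_le_left _ _,
            fun l hl => by rw [hl, min_self]⟩
          rw [min_eq_right h]
          exact lt_of_le_of_ne h (Ne.symm hkD)
      obtain ⟨θ, hθK, hθk, hθge, hθag⟩ := hθ2
      have hξj' : ξ j = t j - θ j := by
        rw [hξj, hMi j, hθag j hj]
      obtain ⟨l, hlj, hlle⟩ := hθK ξ hξ j hξj'
      have hlM : ξ l ≤ M l := by
        have h1 := hθge l
        have h2 := hMi l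
        omega
      by_cases hlk : l = k
      · subst hlk
        have h1 : t l - θ l < M l := by
          have h2 := hMi l
          omega
        omega
      · by_cases hlD : α l = β l
        · exact absurd hlM (not_le.mpr (hLOW l hlD hlj))
        · exact absurd hlM (not_le.mpr (hkstrict l hlD hlk))
  obtain ⟨c, hcval, hcclean, hcle, hcD⟩ :=
    descend_lemma S α β M hSnn hSE2 (∑ i, (c0 i + 1).toNat) c0 hval0 le_rfl
  set ε : I → ℤ := fun i => t i - c i with hε
  have hεi : ∀ i, ε i = t i - c i := fun i => rfl
  have hcM : ∀ i, c i ≤ M i := by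
    intro i
    refine le_trans (hcle i) ?_
    by_cases h : i = j
    · subst h
      have : c0 i = M i - 1 := by simp [hc0]
      omega
    · have : c0 i = M i := by simp [hc0, h]
      omega
  have hcDM : ∀ i, α i ≠ β i → c i = M i := by
    intro i hi
    rw [hcD i hi]
    have hij : i ≠ j := fun h => hi (h ▸ hj)
    simp [hc0, hij]
  refine ⟨ε, ?_, ?_, ?_⟩
  · -- membership in K0set
    intro ξ hξ i hi
    have hi' : ξ i = c i := by rw [hi, hεi i]; ring_nf
    have hgoal : ∀ l, ξ l ≤ c l → l ≠ i → ∃ l', l' ≠ i ∧ ξ l' ≤ t l' - ε l' := by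
      intro l h1 h2
      refine ⟨l, h2, ?_⟩
      rw [hεi l]
      omega
    by_cases hiD : α i ≠ β i
    · by_cases hstrict : ∀ l, α l ≠ β l → l ≠ i → M l < ξ l
      · obtain ⟨l, hleq, hlle⟩ := hcval ξ hξ i hiD (by rw [hi', hcDM i hiD]) hstrict
        exact hgoal l hlle (fun h => hiD (h ▸ hleq))
      · push_neg at hstrict
        obtain ⟨l, hlD, hli, hlle⟩ := hstrict
        exact hgoal l (by rw [hcDM l hlD]; exact hlle) hli
    · push_neg at hiD
      by_contra hno
      push_neg at hno
      have hno' : ∀ l, l ≠ i → c l < ξ l := by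
        intro l hl
        have h := hno l hl
        rw [hεi l] at h
        omega
      refine hcclean ξ hξ i hiD hi' ?_ ?_
      · intro l hlD
        rw [← hcDM l hlD]
        exact hno' l (fun h => hlD (h ▸ hiD ▸ rfl))
      · intro l hleq hli
        exact hno' l hli
  · -- α j < ε j
    have h1 : c j ≤ M j - 1 := by
      refine le_trans (hcle j) ?_
      have : c0 j = M j - 1 := by simp [hc0]
      omega
    have h3 : min (α j) (β j) = α j := by rw [hj, min_self]
    have h4 := hMi j
    have h5 := hεi j
    omega
  · intro i
    constructor
    · have h1 := hcM i
      have h2 := hMi i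
      have h3 := hεi i
      omega
    · intro hiD
      have h1 := hcDM i hiD
      have h2 := hMi i
      have h3 := hεi i
      omega

end StmtFiveAux


/-- **Lemma.** Let `S` be a local good semigroup and `K` a canonical semigroup
ideal of `S`. Then `Δ̄(τ_K) \ Δ(τ_K) ⊆ K`. -/
theorem stmt_5 {I : Type*} [Fintype I] [Nonempty I] (S K : Set (I → ℤ))
    (hS : IsGoodSemigroup S) (hloc : IsLocalSg S)
    (hK : IsCanonicalIdeal S K) :
    sgDeltaBar (sgTau K) \ sgDelta (sgTau K) ⊆ K := by
  classical
  obtain ⟨hS0, hSadd, hSnn, ⟨aS, haS⟩, hSE1, hSE2⟩ := hS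
  obtain ⟨⟨⟨hKne, hKS, b, hbS, hbK⟩, hE1K, hE2K⟩, hmax⟩ := hK
  obtain ⟨κ0, hκ0⟩ := hKne
  set t : I → ℤ := sgTau K with htdef
  set γ : I → ℤ := sgGamma K with hγdef
  have ht : ∀ i, t i = γ i - 1 := by
    intro i
    rw [htdef, hγdef]
    simp [sgTau]
  -- membership in the conductor ideal
  have hCmemG : ∀ (E : Set (I → ℤ)) (δ : I → ℤ),
      δ ∈ sgCond E ↔ ∀ ν : I → ℤ, (0 : I → ℤ) ≤ ν → δ + ν ∈ E :=
    fun E δ => Iff.rfl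
  have hCmem : ∀ δ : I → ℤ, δ ∈ sgCond K ↔ ∀ ν : I → ℤ, (0 : I → ℤ) ≤ ν → δ + ν ∈ K :=
    hCmemG K
  have hCK : ∀ δ ∈ sgCond K, δ ∈ K := by
    intro δ hδ
    have h := (hCmem δ).1 hδ 0 le_rfl
    simpa using h
  have hKlb : ∀ κ ∈ K, ∀ i, -(b i) ≤ κ i := by
    intro κ hκ i
    have h1 : b + κ ∈ S := hbK κ hκ
    have h2 : (0 : I → ℤ) i ≤ (b + κ) i := hSnn (b + κ) h1 i
    have h3 : (b + κ) i = b i + κ i := rfl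
    have h4 : (0 : I → ℤ) i = 0 := rfl
    omega
  have hδ0 : κ0 + aS + 1 ∈ sgCond K := by
    rw [hCmem]
    intro ν hν
    have h1 : aS + 1 + ν ∈ S := by
      refine haS _ ?_
      rw [Pi.le_def]
      intro i
      have h2 := Pi.le_def.mp hν i
      have h3 : (aS + 1 + ν) i = aS i + 1 + ν i := rfl
      have h4 : (0 : I → ℤ) i = 0 := rfl
      omega
    have h2 : κ0 + aS + 1 + ν = κ0 + (aS + 1 + ν) := by ring
    rw [h2]
    exact hKS κ0 hκ0 _ h1
  have hVbdd : ∀ i, BddBelow {n : ℤ | ∃ δ ∈ sgCond K, δ i = n} := by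
    intro i
    refine ⟨-(b i), ?_⟩
    rintro n ⟨δ, hδ, rfl⟩
    exact hKlb δ (hCK δ hδ) i
  have hVne : ∀ i, Set.Nonempty {n : ℤ | ∃ δ ∈ sgCond K, δ i = n} :=
    fun i => ⟨(κ0 + aS + 1) i, ⟨κ0 + aS + 1, hδ0, rfl⟩⟩
  have hγ_eq : ∀ i, γ i = sInf {n : ℤ | ∃ δ ∈ sgCond K, δ i = n} := fun i => rfl
  have hγle : ∀ δ ∈ sgCond K, ∀ i, γ i ≤ δ i := by
    intro δ hδ i
    rw [hγ_eq i]
    exact csInf_le (hVbdd i) ⟨δ, hδ, rfl⟩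
  have hγmem : ∀ i, ∃ δ ∈ sgCond K, δ i = γ i := by
    intro i
    have h := Int.csInf_mem (hVne i) (hVbdd i)
    rw [hγ_eq i]
    exact h
  have hCE1 : ∀ δ ∈ sgCond K, ∀ δ' ∈ sgCond K, (fun i => min (δ i) (δ' i)) ∈ sgCond K := by
    intro δ hδ δ' hδ'
    rw [hCmem]
    intro ν hν
    have h1 : (fun i => min (δ i) (δ' i)) + ν = fun i => min ((δ + ν) i) ((δ' + ν) i) := by
      funext i
      show min (δ i) (δ' i) + ν i = min (δ i + ν i) (δ' i + ν i)
      exact (min_add_add_right _ _ _).symm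
    rw [h1]
    exact hE1K (δ + ν) ((hCmem δ).1 hδ ν hν) (δ' + ν) ((hCmem δ').1 hδ' ν hν)
  have hγC : γ ∈ sgCond K := by
    have key : ∀ F : Finset I, ∃ δ ∈ sgCond K, ∀ i ∈ F, δ i = γ i := by
      intro F
      induction F using Finset.induction_on with
      | empty => exact ⟨_, hδ0, by simp⟩
      | @insert q F hq ih =>
        obtain ⟨δ', hδ', hδ'F⟩ := ih
        obtain ⟨δq, hδq, hδqq⟩ := hγmem q
        refine ⟨fun i => min (δ' i) (δq i), hCE1 δ' hδ' δq hδq, ?_⟩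
        intro i hi
        rcases Finset.mem_insert.mp hi with h | h
        · subst h
          show min (δ' i) (δq i) = γ i
          rw [hδqq]
          exact min_eq_right (hγle δ' hδ' i)
        · show min (δ' i) (δq i) = γ i
          rw [hδ'F i h]
          exact min_eq_left (hγle δq hδq i)
    obtain ⟨δ, hδ, hall⟩ := key Finset.univ
    have hfun : δ = γ := funext fun i => hall i (Finset.mem_univ i)
    rwa [← hfun]
  have hcone : ∀ δ : I → ℤ, (∀ i, γ i ≤ δ i) → δ ∈ K := by
    intro δ h
    have h1 : γ + (δ - γ) ∈ K := by
      refine (hCmem γ).1 hγC (δ - γ) ?_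
      rw [Pi.le_def]
      intro i
      have h2 : (δ - γ) i = δ i - γ i := rfl
      have h3 : (0 : I → ℤ) i = 0 := rfl
      have h4 := h i
      omega
    have h5 : γ + (δ - γ) = δ := by ring
    rwa [h5] at h1
  -- K is contained in the dual canonical set
  set K0 : Set (I → ℤ) := K0set S t with hK0def
  have hγle' : ∀ δ ∈ CondSet K, ∀ i, γ i ≤ δ i := hγle
  have hKK0 : K ⊆ K0 := by
    intro κ hκ
    rw [hK0def]
    intro ξ hξ i hi
    by_contra hno
    push_neg at hno
    have hz : κ + ξ ∈ K := hKS κ hκ ξ hξ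
    have hzi : (κ + ξ) i = γ i - 1 := by
      have h1 : (κ + ξ) i = κ i + ξ i := rfl
      have h2 := ht i
      omega
    refine lemmaA K hE1K hE2K γ hγle' hcone (κ + ξ) hz i hzi ?_
    intro l hl
    have h1 := hno l hl
    have h2 : (κ + ξ) l = κ l + ξ l := rfl
    have h3 := ht l
    omega
  -- the dual canonical set is a good semigroup ideal with the same conductor
  have hconeK0 : ∀ δ : I → ℤ, (∀ i, γ i ≤ δ i) → δ ∈ K0 := by
    intro δ h
    rw [hK0def]
    intro ξ hξ i hi
    exfalso
    have h1 : (0:ℤ) ≤ ξ i := pi_zero_le_apply (hSnn ξ hξ) i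
    have h2 := ht i
    have h3 := h i
    omega
  have hK0ne : K0.Nonempty := ⟨γ, hconeK0 γ (fun i => le_rfl)⟩
  have hK0S : ∀ a ∈ K0, ∀ s ∈ S, a + s ∈ K0 := k0_plus S t hSadd
  have hK0lb : ∀ a ∈ K0, ∀ i, t i - aS i ≤ a i := by
    intro a ha i
    by_contra hlt
    push_neg at hlt
    set ξ : I → ℤ := fun l => if l = i then t i - a i else max (aS l) (t l - a l + 1) with hξdef
    clear_value ξ
    have hξS : ξ ∈ S := by
      refine haS ξ ?_
      rw [Pi.le_def]
      intro l
      by_cases h : l = i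
      · subst h
        have h1 : ξ l = t l - a l := by simp [hξdef]
        omega
      · have h1 : ξ l = max (aS l) (t l - a l + 1) := by simp [hξdef, h]
        rw [h1]
        exact le_max_left _ _
    have hξi : ξ i = t i - a i := by simp [hξdef]
    obtain ⟨l, hl, hle⟩ := ha ξ hξS i hξi
    have h1 : ξ l = max (aS l) (t l - a l + 1) := by simp [hξdef, hl]
    have h2 : t l - a l + 1 ≤ ξ l := by rw [h1]; exact le_max_right _ _
    omega
  have hK0bdd : ∃ α' ∈ S, ∀ x ∈ K0, α' + x ∈ S := by
    refine ⟨fun i => max (aS i) (aS i + (aS i - t i)),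
      haS _ (by rw [Pi.le_def]; intro i; exact le_max_left _ _), ?_⟩
    intro x hx
    refine haS _ ?_
    rw [Pi.le_def]
    intro i
    have h1 := hK0lb x hx i
    have h2 : aS i + (aS i - t i) ≤ max (aS i) (aS i + (aS i - t i)) := le_max_right _ _
    have h3 : ((fun i => max (aS i) (aS i + (aS i - t i))) + x) i
        = max (aS i) (aS i + (aS i - t i)) + x i := rfl
    omega
  have hK0good : IsGoodIdeal S K0 :=
    ⟨⟨hK0ne, hK0S, hK0bdd⟩, k0_E1 S t, k0_E2 S t hSnn hSE2⟩
  have hγK0mem : γ ∈ sgCond K0 := by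
    rw [hCmemG]
    intro ν hν
    refine hconeK0 (γ + ν) (fun i => ?_)
    have h1 : (γ + ν) i = γ i + ν i := rfl
    have h2 := Pi.le_def.mp hν i
    have h3 : (0 : I → ℤ) i = 0 := rfl
    omega
  have hγγ : sgGamma K0 = sgGamma K := by
    funext i
    have hK0Cbdd : BddBelow {n : ℤ | ∃ δ ∈ sgCond K0, δ i = n} := by
      refine ⟨t i - aS i, ?_⟩
      rintro n ⟨δ, hδ, rfl⟩
      have h1 : δ ∈ K0 := by
        have h := (hCmemG K0 δ).1 hδ 0 le_rfl
        simpa using h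
      exact hK0lb δ h1 i
    have hgoal : sgGamma K0 i = sInf {n : ℤ | ∃ δ ∈ sgCond K0, δ i = n} := rfl
    rw [hgoal, ← hγdef]
    apply le_antisymm
    · exact csInf_le hK0Cbdd ⟨γ, hγK0mem, rfl⟩
    · refine le_csInf ⟨γ i, γ, hγK0mem, rfl⟩ ?_
      rintro n ⟨δ, hδ, rfl⟩
      by_contra hlt
      push_neg at hlt
      set P : I → ℤ := fun l => if l = i then t i else δ l + (max 0 (t l - δ l) + 1) with hP
      clear_value P
      have hPK0 : P ∈ K0 := by
        have h1 : P = δ + (P - δ) := by ring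
        rw [h1]
        refine (hCmemG K0 δ).1 hδ (P - δ) ?_
        rw [Pi.le_def]
        intro l
        have h2 : (P - δ) l = P l - δ l := rfl
        have h3 : (0 : I → ℤ) l = 0 := rfl
        by_cases h : l = i
        · subst h
          have h4 : P l = t l := by simp [hP]
          have h5 := ht l
          rw [h3, h2, h4, h5]
          linarith only [hlt]
        · have h4 : P l = δ l + (max 0 (t l - δ l) + 1) := by simp [hP, h]
          have h5 : (0:ℤ) ≤ max 0 (t l - δ l) := le_max_left _ _
          rw [h3, h2, h4]
          linarith only [h5]
      have h0i : (0 : I → ℤ) i = t i - P i := by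
        have h1 : P i = t i := by simp [hP]
        have h2 : (0 : I → ℤ) i = 0 := rfl
        rw [h2, h1]
        ring
      obtain ⟨l, hl, hle⟩ := hPK0 0 hS0 i h0i
      have h2 : P l = δ l + (max 0 (t l - δ l) + 1) := by simp [hP, hl]
      have h3 : t l - δ l ≤ max 0 (t l - δ l) := le_max_right _ _
      have h5 : (0:ℤ) ≤ t l - P l := hle
      linarith only [h2, h3, h5]
  have hK0K : K0 = K := hmax K0 hK0good hγγ hKK0
  intro β hβ
  obtain ⟨hbar, hnot⟩ := hβ
  rw [← hK0K, hK0def]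
  obtain ⟨i0, hi0⟩ := Set.mem_iUnion.mp hbar
  obtain ⟨hi0eq, hi0ge⟩ := hi0
  have hge : ∀ l, t l ≤ β l := by
    intro l
    by_cases h : l = i0
    · subst h; exact le_of_eq hi0eq.symm
    · exact hi0ge l h
  intro ξ hξ i hi
  have h0ξ : ∀ l, (0:ℤ) ≤ ξ l := fun l => pi_zero_le_apply (hSnn ξ hξ) l
  have h1 : ξ i = 0 := by
    have h2 := hge i
    have h3 := h0ξ i
    omega
  have hβi : β i = t i := by
    have h3 := h0ξ i
    omega
  have hξ0 : ξ = 0 := hloc ξ hξ ⟨i, h1⟩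
  have hnotΔ : ¬(β i = t i ∧ ∀ l, l ≠ i → t l < β l) := by
    intro hc
    exact hnot (Set.mem_iUnion.mpr ⟨i, hc⟩)
  have hex : ∃ l, l ≠ i ∧ ¬ t l < β l := by
    by_contra hno
    push_neg at hno
    exact hnotΔ ⟨hβi, fun l hl => hno l hl⟩
  obtain ⟨l, hl, hle⟩ := hex
  refine ⟨l, hl, ?_⟩
  have h2 : β l = t l := le_antisymm (not_lt.mp hle) (hge l)
  rw [hξ0]
  have h3 : (0 : I → ℤ) l = 0 := rfl
  omega
end

section
/- Let S be a local symmetric good semigroup with maximal ideal M_S = S ∖ {0}. If M_S − M_S is symmetric, then α − μ_{M_S} ∈ S for every α ∈ M_S ∖ C_S. -/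
/-! For a good semigroup `G` no element of `G` lies in `Δ(τ_G)`, and the normalized canonical
ideal `K⁰_G = {w | Δ(τ_G - w) ∩ G = ∅}` is a good ideal containing `G` with conductor `γ_G`.
Hence, when `G` is symmetric, every `w ∉ G` has a witness `s ∈ G` with `w + s ∈ Δ(τ_G)`.

Apply this to `S` and to `M − M`, whose conductor is `γ_S − μ`. Let `x = α − μ ∉ S` and let
`s` be its witness. If `s = 0` then `α ≥ τ_S + μ ≥ γ_S`, so `α ∈ C_S`. Otherwise `s ∈ M`, and if
`x ∈ M − M` then `x + s ∈ M ∩ Δ(τ_S)`; if `x ∉ M − M`, its witness `t ∈ M − M` gives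
`α + t ∈ M ∩ Δ(τ_S)`. -/

section GoodSemigroupProofs

variable {I : Type*} {G : Set (I → ℤ)}

/-- `Δ_i(α)`. -/
def sgDeltaAt (α : I → ℤ) (i : I) : Set (I → ℤ) :=
  {β | β i = α i ∧ ∀ j, j ≠ i → α j < β j}

lemma mem_sgDelta {α β : I → ℤ} : β ∈ sgDelta α ↔ ∃ i, β ∈ sgDeltaAt α i :=
  Set.mem_iUnion

lemma le_of_mem_sgDeltaAt {α β : I → ℤ} {i : I} (h : β ∈ sgDeltaAt α i) : α ≤ β := by
  intro j
  rcases eq_or_ne j i with rfl | hj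
  · exact h.1.ge
  · exact (h.2 j hj).le

lemma sgDeltaAt_subset_of_le {α β : I → ℤ} {i : I} (hi : β i = α i) (h : α ≤ β) :
    sgDeltaAt β i ⊆ sgDeltaAt α i :=
  fun _ hs => ⟨hs.1.trans hi, fun j hj => (h j).trans_lt (hs.2 j hj)⟩

lemma mem_sgDeltaAt_sub_iff {v w s : I → ℤ} {i : I} :
    s ∈ sgDeltaAt (v - w) i ↔ w + s ∈ sgDeltaAt v i := by
  simp only [sgDeltaAt, Set.mem_ofPred_eq, Pi.add_apply, Pi.sub_apply]
  constructor <;> rintro ⟨hi, hj⟩ <;> refine ⟨by omega, fun j hji => ?_⟩ <;>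
    have := hj j hji <;> omega

lemma propE1.inf_mem {E : Set (I → ℤ)} (hE : propE1 E) {α β : I → ℤ} (hα : α ∈ E)
    (hβ : β ∈ E) : α ⊓ β ∈ E :=
  hE α hα β hβ

lemma sgMu_eq_of_isLeast {E : Set (I → ℤ)} {μ : I → ℤ} (h : IsLeast E μ) : sgMu E = μ := by
  funext i
  refine IsLeast.csInf_eq ⟨⟨μ, h.1, rfl⟩, ?_⟩
  rintro _ ⟨α, hα, rfl⟩
  exact h.2 hα i

lemma mem_sgCond_iff {E : Set (I → ℤ)} {w : I → ℤ} : w ∈ sgCond E ↔ ∀ v, w ≤ v → v ∈ E :=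
  ⟨fun h v hv => by simpa using h (v - w) (sub_nonneg.2 hv),
    fun h _ hβ => h _ (le_add_of_nonneg_right hβ)⟩

lemma mem_sgK0_iff {w : I → ℤ} :
    w ∈ sgK0 G ↔ ∀ s ∈ G, ∀ i, s ∉ sgDeltaAt (sgTau G - w) i := by
  simp only [sgK0, Set.mem_ofPred_eq, Set.eq_empty_iff_forall_notMem, Set.mem_inter_iff,
    mem_sgDelta]
  exact ⟨fun h s hs i hi => h s ⟨⟨i, hi⟩, hs⟩, fun h s ⟨⟨i, hi⟩, hs⟩ => h s hs i hi⟩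

lemma propE1_sgK0 : propE1 (sgK0 G) := by
  intro x hx y hy
  change x ⊓ y ∈ sgK0 G
  rw [mem_sgK0_iff] at hx hy ⊢
  intro s hs i hsi
  rcases le_total (x i) (y i) with hxy | hxy
  · exact hx s hs i <| sgDeltaAt_subset_of_le (by simp [hxy]) (sub_le_sub_left inf_le_left _) hsi
  · exact hy s hs i <| sgDeltaAt_subset_of_le (by simp [hxy]) (sub_le_sub_left inf_le_right _) hsi

lemma exists_mem_sgDeltaAt_of_propE2 (hG : propE2 G) {s s' v : I → ℤ}
    {a i : I} (hai : a ≠ i) (hs : s ∈ G) (hs' : s' ∈ G) (hsv : s ∈ sgDeltaAt v i)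
    (hs'a : s' a = v a) (hs'i : s' i = v i) (hs'v : ∀ m, m ≠ a → m ≠ i → v m < s' m) :
    ∃ ε ∈ G, ε ∈ sgDeltaAt v a := by
  obtain ⟨ε, hε, hεi, hεm⟩ := hG s' hs' s hs i (hs'i.trans hsv.1.symm)
  have hsa := hsv.2 a hai
  refine ⟨ε, hε, by have := (hεm a).2 (by omega); omega, fun m hma => ?_⟩
  rcases eq_or_ne m i with rfl | hmi
  · omega
  · have := (hεm m).1
    have := hs'v m hma hmi
    have := hsv.2 m hmi
    omega

/-- The condition defining `sgK0 G`, imposed only at the coordinates in `A`. -/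
def sgK0On (G : Set (I → ℤ)) (A : Set I) : Set (I → ℤ) :=
  {w | ∀ s ∈ G, ∀ a ∈ A, s ∉ sgDeltaAt (sgTau G - w) a}

lemma update_inf_mem_sgK0On [DecidableEq I] {x y : I → ℤ} (hx : x ∈ sgK0 G)
    (hy : y ∈ sgK0 G) {j : I} (hxy : x j = y j) :
    Function.update (x ⊓ y) j (x j + 1) ∈ sgK0On G {a | x a ≠ y a} := by
  intro s hs a (ha : x a ≠ y a) ⟨hsa, hsm⟩
  have haj : a ≠ j := fun h => ha (h ▸ hxy)
  simp only [Pi.sub_apply, Function.update_of_ne haj] at hsa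
  have hsj : sgTau G j - (x j + 1) < s j := by simpa using hsm j haj.symm
  have hsm' : ∀ m, m ≠ a → m ≠ j → sgTau G m - (x ⊓ y) m < s m := fun m hma hmj => by
    simpa [Function.update_of_ne hmj] using hsm m hma
  rcases (Int.le_of_sub_one_lt (by omega : sgTau G j - x j - 1 < s j)).lt_or_eq with hlt | heq
  · refine mem_sgK0_iff.1 (propE1_sgK0 x hx y hy) s hs a ⟨by simpa using hsa, fun m hma => ?_⟩
    rcases eq_or_ne m j with rfl | hmj
    · simp only [Pi.sub_apply] at hlt ⊢
      omega
    · exact hsm' m hma hmj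
  -- `s` hits `Δ_j(τ - u)` for the one of `x, y` that is larger at `a`
  have hit : ∀ u ∈ sgK0 G, x ⊓ y ≤ u → u j = x j → (x ⊓ y) a < u a → False := by
    intro u hu hzu huj hua
    refine mem_sgK0_iff.1 hu s hs j ⟨by simp [huj, heq], fun m hmj => ?_⟩
    rcases eq_or_ne m a with rfl | hma
    · simp only [Pi.sub_apply] at hsa ⊢
      omega
    · have h1 := hsm' m hma hmj
      have h2 : (x ⊓ y) m ≤ u m := hzu m
      simp only [Pi.sub_apply] at h1 ⊢
      omega
  rcases ha.lt_or_gt with h | h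
  · exact hit y hy inf_le_right hxy.symm (by simpa [h.le] using h)
  · exact hit x hx inf_le_left rfl (by simpa [h.le] using h)

lemma one_le_of_mem_diff_zero {S : Set (I → ℤ)} (hS : IsGoodSemigroup S) (hloc : IsLocalSg S)
    {a : I → ℤ} (ha : a ∈ S \ {0}) : 1 ≤ a := fun i => by
  by_contra h
  have h' : a i < 1 := by simpa using h
  exact ha.2 (hloc a ha.1 ⟨i, le_antisymm (by omega) (hS.2.2.1 a ha.1 i)⟩)

namespace IsGoodSemigroup

lemma add_mem_sgK0 (hG : IsGoodSemigroup G) {w g : I → ℤ} (hw : w ∈ sgK0 G) (hg : g ∈ G) :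
    w + g ∈ sgK0 G := by
  rw [mem_sgK0_iff] at hw ⊢
  intro s hs i hsi
  rw [mem_sgDeltaAt_sub_iff, add_assoc] at hsi
  exact hw (g + s) (hG.2.1 g hg s hs) i (mem_sgDeltaAt_sub_iff.2 hsi)

lemma mem_sgK0_of_sgGamma_le (hG : IsGoodSemigroup G) {w : I → ℤ} (hw : sgGamma G ≤ w) :
    w ∈ sgK0 G := by
  refine mem_sgK0_iff.2 fun s hs i hsi => ?_
  have h1 : s i = sgGamma G i - 1 - w i := by simpa [sgTau] using hsi.1
  have h2 : sgGamma G i ≤ w i := hw i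
  have h3 : 0 ≤ s i := hG.2.2.1 s hs i
  omega

lemma isLeast_sgCond_sgK0 (hG : IsGoodSemigroup G) : IsLeast (sgCond (sgK0 G)) (sgGamma G) := by
  classical
  refine ⟨mem_sgCond_iff.2 fun v hv => hG.mem_sgK0_of_sgGamma_le hv,
    fun c hc i => le_of_not_gt fun (hci : c i < sgGamma G i) => ?_⟩
  -- `p` lies above `c`, hence in `K⁰`, yet `0 ∈ Δ_i(τ - p)`
  set p := Function.update (c ⊔ sgGamma G) i (sgTau G i)
  have hcp : c ≤ p := fun m => by
    rcases eq_or_ne m i with rfl | hm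
    · have : sgTau G m = sgGamma G m - 1 := rfl
      simp only [p, Function.update_self]
      omega
    · simp [p, Function.update_of_ne hm]
  refine mem_sgK0_iff.1 (mem_sgCond_iff.1 hc p hcp) 0 hG.1 i ⟨by simp [p], fun m hm => ?_⟩
  have : sgGamma G m ≤ p m := by simp [p, Function.update_of_ne hm]
  simp only [sgTau, Pi.sub_apply, Pi.one_apply, Pi.zero_apply] at this ⊢
  omega

lemma sgGamma_sgK0 (hG : IsGoodSemigroup G) : sgGamma (sgK0 G) = sgGamma G :=
  sgMu_eq_of_isLeast hG.isLeast_sgCond_sgK0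

lemma mem_sgK0_of_forall_update_notMem [DecidableEq I] (hG : IsGoodSemigroup G) {A : Set I}
    {w : I → ℤ} (hw : w ∈ sgK0On G A)
    (hmax : ∀ i ∉ A, w i < sgGamma G i → Function.update w i (w i + 1) ∉ sgK0On G A) :
    w ∈ sgK0 G := by
  refine mem_sgK0_iff.2 fun s hs i hsi => ?_
  by_cases hiA : i ∈ A
  · exact hw s hs i hiA hsi
  have hsi' : s i = sgGamma G i - 1 - w i := by simpa [sgTau] using hsi.1
  have hs0 : 0 ≤ s i := hG.2.2.1 s hs i
  refine hmax i hiA (by omega) fun s' hs' a haA ⟨hs'a, hs'm⟩ => ?_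
  have hai : a ≠ i := fun h => hiA (h ▸ haA)
  simp only [Pi.sub_apply, Function.update_of_ne hai] at hs'a
  have hs'i : sgTau G i - (w i + 1) < s' i := by simpa using hs'm i hai.symm
  have hs'v : ∀ m, m ≠ a → m ≠ i → (sgTau G - w) m < s' m := fun m hma hmi => by
    simpa [Function.update_of_ne hmi] using hs'm m hma
  rcases (Int.le_of_sub_one_lt (by omega : sgTau G i - w i - 1 < s' i)).lt_or_eq with hlt | heq
  · refine hw s' hs' a haA ⟨by simpa using hs'a, fun m hma => ?_⟩
    rcases eq_or_ne m i with rfl | hmi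
    · simpa using hlt
    · exact hs'v m hma hmi
  · obtain ⟨ε, hε, hεa⟩ := exists_mem_sgDeltaAt_of_propE2 hG.2.2.2.2.2 hai hs hs' hsi
      (by simpa using hs'a) (by simpa using heq.symm) hs'v
    exact hw ε hε a haA hεa

end IsGoodSemigroup

variable [Fintype I]

lemma isLeast_sgMu {E : Set (I → ℤ)} (hne : E.Nonempty) (hbdd : BddBelow E) (hE : propE1 E) :
    IsLeast E (sgMu E) := by
  classical
  obtain ⟨b, hb⟩ := hbdd
  set coord : I → Set ℤ := fun i => {n | ∃ α ∈ E, α i = n}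
  have hcoord : ∀ i, BddBelow (coord i) := fun i =>
    ⟨b i, by rintro _ ⟨α, hα, rfl⟩; exact hb hα i⟩
  have hle : sgMu E ∈ lowerBounds E := fun α hα i => csInf_le (hcoord i) ⟨α, hα, rfl⟩
  have hattain : ∀ i, ∃ α ∈ E, α i = sgMu E i := fun i =>
    Int.csInf_mem (s := coord i) ⟨_, hne.some, hne.some_mem, rfl⟩ (hcoord i)
  choose a ha hai using hattain
  have hfin : ∀ F : Finset I, ∃ c ∈ E, ∀ i ∈ F, c i ≤ sgMu E i := by
    intro F
    induction F using Finset.induction_on with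
    | empty => exact ⟨_, hne.some_mem, by simp⟩
    | insert j F _ ih =>
      obtain ⟨c, hc, hcF⟩ := ih
      refine ⟨c ⊓ a j, hE.inf_mem hc (ha j), ?_⟩
      simp only [Finset.mem_insert, forall_eq_or_imp]
      exact ⟨(inf_le_right : c ⊓ a j ≤ a j) j |>.trans_eq (hai j),
        fun i hi => (inf_le_left : c ⊓ a j ≤ c) i |>.trans (hcF i hi)⟩
  obtain ⟨c, hc, hcμ⟩ := hfin Finset.univ
  exact ⟨le_antisymm (hle hc) (fun i => hcμ i (Finset.mem_univ i)) ▸ hc, hle⟩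

namespace IsGoodSemigroup

lemma isLeast_sgGamma (hG : IsGoodSemigroup G) : IsLeast (sgCond G) (sgGamma G) := by
  obtain ⟨-, -, hnonneg, ⟨α, hα⟩, hE1, -⟩ := hG
  refine isLeast_sgMu ⟨α, mem_sgCond_iff.2 hα⟩
    ⟨0, fun c hc => hnonneg c (mem_sgCond_iff.1 hc c le_rfl)⟩ fun a ha b hb => ?_
  change a ⊓ b ∈ sgCond G
  rw [mem_sgCond_iff] at ha hb ⊢
  intro v hv
  have := hE1.inf_mem (ha (v ⊔ a) le_sup_right) (hb (v ⊔ b) le_sup_right)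
  rwa [← sup_inf_left, sup_of_le_left hv] at this

lemma mem_of_sgGamma_le (hG : IsGoodSemigroup G) {v : I → ℤ} (hv : sgGamma G ≤ v) : v ∈ G :=
  mem_sgCond_iff.1 hG.isLeast_sgGamma.1 v hv

lemma mem_sgCond_of_sgGamma_le (hG : IsGoodSemigroup G) {v : I → ℤ} (hv : sgGamma G ≤ v) :
    v ∈ sgCond G :=
  mem_sgCond_iff.2 fun _ hu => hG.mem_of_sgGamma_le (hv.trans hu)

lemma update_add_one_mem [DecidableEq I] (hG : IsGoodSemigroup G) {y : I → ℤ} (hy : y ∈ G) {m : I}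
    (hm : sgGamma G m ≤ y m) : Function.update y m (y m + 1) ∈ G := by
  set big : I → ℤ := fun l => max (y l) (sgGamma G l) + 1
  have hbig : ∀ t, sgGamma G m ≤ t → Function.update big m t ∈ G := fun t ht =>
    hG.mem_of_sgGamma_le fun l => by
      rcases eq_or_ne l m with rfl | hl
      · simpa using ht
      · simp only [Function.update_of_ne hl, big]
        omega
  obtain ⟨ε, hε, hεm, hεl⟩ := hG.2.2.2.2.2 y hy _ (hbig (y m) hm) m (by simp)
  convert hG.2.2.2.2.1 ε hε _ (hbig (y m + 1) (by omega)) using 1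
  funext l
  rcases eq_or_ne l m with rfl | hl
  · simp only [Function.update_self]
    omega
  · have := (hεl l).2
    simp only [Function.update_of_ne hl, big] at this ⊢
    omega

lemma update_mem_of_le [DecidableEq I] (hG : IsGoodSemigroup G) {y : I → ℤ} (hy : y ∈ G)
    {m : I} (hm : sgGamma G m ≤ y m) {t : ℤ} (ht : y m ≤ t) : Function.update y m t ∈ G := by
  induction t, ht using Int.leInduction with
  | base => simpa using hy
  | succ t ht ih => simpa using hG.update_add_one_mem ih (m := m) (by simpa using hm.trans ht)

lemma mem_of_mem_of_le (hG : IsGoodSemigroup G) {x y : I → ℤ} (hy : y ∈ G) (hyx : y ≤ x)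
    (hγ : ∀ m, y m < x m → sgGamma G m ≤ y m) : x ∈ G := by
  classical
  suffices ∀ F : Finset I, F.piecewise x y ∈ G by simpa using this Finset.univ
  intro F
  induction F using Finset.induction_on with
  | empty => simpa
  | insert a F haF ih =>
    rw [Finset.piecewise_insert]
    have hya : F.piecewise x y a = y a := Finset.piecewise_eq_of_notMem _ _ _ haF
    rcases (hyx a).lt_or_eq with h | h
    · exact hG.update_mem_of_le ih (hya ▸ hγ a h) (hya ▸ h.le)
    · rwa [← h, ← hya, Function.update_eq_self]

lemma notMem_sgDeltaAt_sgTau (hG : IsGoodSemigroup G) {s : I → ℤ} (hs : s ∈ G) (i : I) :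
    s ∉ sgDeltaAt (sgTau G) i := by
  classical
  rintro ⟨hsi, hsm⟩
  have hτ : ∀ m, sgTau G m = sgGamma G m - 1 := fun _ => rfl
  suffices Function.update (sgGamma G) i (sgGamma G i - 1) ∈ sgCond G by
    simpa using hG.isLeast_sgGamma.2 this i
  rw [mem_sgCond_iff]
  intro v hv
  have hvm : ∀ m, m ≠ i → sgGamma G m ≤ v m := fun m hm => by simpa [hm] using hv m
  have hvi : sgGamma G i - 1 ≤ v i := by simpa using hv i
  rcases hvi.lt_or_eq with hvi | hvi
  · refine hG.mem_of_sgGamma_le fun m => ?_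
    rcases eq_or_ne m i with rfl | hm
    · exact Int.le_of_sub_one_lt hvi
    · exact hvm m hm
  have hw : Function.update v i (sgGamma G i) ∈ G := hG.mem_of_sgGamma_le fun m => by
    rcases eq_or_ne m i with rfl | hm
    · simp
    · simpa [hm] using hvm m hm
  -- `s ⊓ update v i γᵢ` agrees with `v` at `i` and is `≥ γ` at the other coordinates
  refine hG.mem_of_mem_of_le (hG.2.2.2.2.1 s hs _ hw) (fun m => ?_) fun m hm => ?_
  · rcases eq_or_ne m i with rfl | hmi
    · simp only [Function.update_self, hτ] at hsi ⊢
      omega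
    · simp only [Function.update_of_ne hmi]
      exact min_le_right _ _
  · rcases eq_or_ne m i with rfl | hmi
    · simp only [Function.update_self, hτ] at hsi hm
      omega
    · have h1 := hsm m hmi
      have h2 := hvm m hmi
      simp only [Function.update_of_ne hmi, hτ] at h1 hm ⊢
      omega

lemma subset_sgK0 (hG : IsGoodSemigroup G) : G ⊆ sgK0 G := fun w hw =>
  mem_sgK0_iff.2 fun s hs i hsi =>
    hG.notMem_sgDeltaAt_sgTau (hG.2.1 w hw s hs) i (mem_sgDeltaAt_sub_iff.1 hsi)

lemma sgK0_nonneg (hG : IsGoodSemigroup G) {w : I → ℤ} (hw : w ∈ sgK0 G) : 0 ≤ w := by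
  have hcond : w + sgGamma G ∈ sgCond (sgK0 G) := mem_sgCond_iff.2 fun v hv => by
    simpa using hG.add_mem_sgK0 hw (hG.mem_of_sgGamma_le (le_sub_iff_add_le'.2 hv))
  simpa using hG.isLeast_sgCond_sgK0.2 hcond

lemma propE2_sgK0 (hG : IsGoodSemigroup G) : propE2 (sgK0 G) := by
  classical
  intro x hx y hy j hxy
  -- `w` is a maximal element of the box `[v₀, cap]` satisfying the `K⁰` condition at the
  -- coordinates where `x ≠ y`; maximality forces the condition at the other coordinates too
  set v₀ := Function.update (x ⊓ y) j (x j + 1)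
  set cap : I → ℤ := fun k => if x k = y k then max (v₀ k) (sgGamma G k) else min (x k) (y k)
  have hv₀cap : v₀ ≤ cap := fun k => by
    by_cases hk : x k = y k
    · simp [cap, hk]
    · have hkj : k ≠ j := fun h => hk (h ▸ hxy)
      simp [cap, v₀, hk, Function.update_of_ne hkj]
  obtain ⟨w, hv₀w, hw⟩ := ((Set.finite_Icc v₀ cap).inter_of_left (sgK0On G {a | x a ≠ y a}))
    |>.exists_le_maximal ⟨⟨le_rfl, hv₀cap⟩, update_inf_mem_sgK0On hx hy hxy⟩
  obtain ⟨⟨-, hwcap⟩, hwA⟩ := hw.prop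
  have hwK : w ∈ sgK0 G := hG.mem_sgK0_of_forall_update_notMem hwA fun i hi hwi hmem => by
    have hcapi : sgGamma G i ≤ cap i := by simp [cap, show x i = y i from not_not.1 hi]
    have hup : w ≤ Function.update w i (w i + 1) := le_update_self_iff.2 (by omega)
    have := hw.2 ⟨⟨hv₀w.trans hup, update_le_iff.2 ⟨by omega, fun k _ => hwcap k⟩⟩, hmem⟩ hup i
    simp at this
  have hzw : ∀ i, min (x i) (y i) ≤ w i := fun i => by
    have : v₀ i ≤ w i := hv₀w i
    rcases eq_or_ne i j with rfl | hij
    · simp only [v₀, Function.update_self] at this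
      omega
    · simpa [v₀, Function.update_of_ne hij] using this
  refine ⟨w, hwK, ?_, fun i => ⟨hzw i, fun hi => le_antisymm ?_ (hzw i)⟩⟩
  · have : v₀ j ≤ w j := hv₀w j
    simp only [v₀, Function.update_self] at this
    omega
  · have : w i ≤ cap i := hwcap i
    simpa [cap, hi] using this

lemma isGoodIdeal_sgK0 (hG : IsGoodSemigroup G) : IsGoodIdeal G (sgK0 G) :=
  ⟨⟨⟨0, hG.subset_sgK0 hG.1⟩, fun _ hw _ hg => hG.add_mem_sgK0 hw hg, sgGamma G,
      hG.mem_of_sgGamma_le le_rfl,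
      fun _ hβ => hG.mem_of_sgGamma_le (le_add_of_nonneg_right (hG.sgK0_nonneg hβ))⟩,
    propE1_sgK0, hG.propE2_sgK0⟩

end IsGoodSemigroup

namespace IsSymmetricSg

lemma sgK0_eq (hG : IsSymmetricSg G) : sgK0 G = G :=
  hG.2.2 _ (hG.1.isGoodIdeal_sgK0) hG.1.sgGamma_sgK0 hG.1.subset_sgK0

lemma exists_mem_sgDeltaAt_of_notMem (hG : IsSymmetricSg G) {w : I → ℤ} (hw : w ∉ G) :
    ∃ s ∈ G, ∃ i, s ∈ sgDeltaAt (sgTau G - w) i := by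
  rw [← hG.sgK0_eq, mem_sgK0_iff] at hw
  simpa using hw

end IsSymmetricSg

lemma isLeast_sgMu_diff_zero {S : Set (I → ℤ)} (hS : IsGoodSemigroup S) (hloc : IsLocalSg S)
    (hne : (S \ {0}).Nonempty) : IsLeast (S \ {0}) (sgMu (S \ {0})) := by
  refine isLeast_sgMu hne ⟨0, fun a ha => hS.2.2.1 a ha.1⟩ fun a ha b hb =>
    ⟨hS.2.2.2.2.1 a ha.1 b hb.1, ?_⟩
  obtain ⟨i, -⟩ := Function.ne_iff.1 ha.2
  have h0 : min (a i) (b i) ≠ 0 := by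
    have := one_le_of_mem_diff_zero hS hloc ha i
    have := one_le_of_mem_diff_zero hS hloc hb i
    simp only [Pi.one_apply] at *
    omega
  exact fun h => h0 (congrFun h i)

lemma sgGamma_sgDiff_diff_zero {S : Set (I → ℤ)} (hS : IsGoodSemigroup S) (hγ : sgGamma S ≠ 0)
    {μ : I → ℤ} (hμ : IsLeast (S \ {0}) μ) :
    sgGamma (sgDiff (S \ {0}) (S \ {0})) = sgGamma S - μ := by
  refine sgMu_eq_of_isLeast ⟨mem_sgCond_iff.2 fun v hv m hm => ?_, fun c hc => ?_⟩
  · have hγv : sgGamma S ≤ v + m := by simpa using add_le_add hv (hμ.2 hm)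
    refine ⟨hS.mem_of_sgGamma_le hγv, fun h0 => hγ ?_⟩
    exact le_antisymm (Set.mem_singleton_iff.1 h0 ▸ hγv) (hS.2.2.1 _ (hS.mem_of_sgGamma_le le_rfl))
  · rw [sub_le_iff_le_add]
    refine hS.isLeast_sgGamma.2 (mem_sgCond_iff.2 fun v hv => ?_)
    simpa using (mem_sgCond_iff.1 hc (v - μ) (le_sub_iff_add_le.2 hv) μ hμ.1).1

end GoodSemigroupProofs

theorem stmt_10_general {I : Type*} [Fintype I] (S : Set (I → ℤ))
    (hS : IsSymmetricSg S) (hloc : IsLocalSg S)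
    (hMM : IsSymmetricSg (sgDiff (S \ {0}) (S \ {0}))) :
    ∀ α ∈ (S \ {0}) \ sgCond S, α - sgMu (S \ {0}) ∈ S := by
  rintro α ⟨hαM, hαC⟩
  have hγα : ¬ sgGamma S ≤ α := fun h => hαC (hS.1.mem_sgCond_of_sgGamma_le h)
  have hμ := isLeast_sgMu_diff_zero hS.1 hloc ⟨α, hαM⟩
  have hτ : sgTau (sgDiff (S \ {0}) (S \ {0})) - (α - sgMu (S \ {0})) = sgTau S - α := by
    have hγ : sgGamma S ≠ 0 := fun h => hγα (h ▸ hS.1.2.2.1 α hαM.1)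
    rw [sgTau, sgTau, sgGamma_sgDiff_diff_zero hS.1 hγ hμ]
    abel
  by_contra hx
  obtain ⟨s, hs, i, hsi⟩ := hS.exists_mem_sgDeltaAt_of_notMem hx
  rcases eq_or_ne s 0 with rfl | hs0
  · refine hγα fun k => ?_
    have h1 : (sgTau S - (α - sgMu (S \ {0}))) k ≤ 0 := le_of_mem_sgDeltaAt hsi k
    have h2 : (1 : I → ℤ) k ≤ sgMu (S \ {0}) k := one_le_of_mem_diff_zero hS.1 hloc hμ.1 k
    simp only [sgTau, Pi.sub_apply, Pi.one_apply] at h1 h2 ⊢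
    omega
  by_cases hxT : α - sgMu (S \ {0}) ∈ sgDiff (S \ {0}) (S \ {0})
  · exact hS.1.notMem_sgDeltaAt_sgTau (hxT s ⟨hs, hs0⟩).1 i (mem_sgDeltaAt_sub_iff.1 hsi)
  · obtain ⟨t, ht, k, htk⟩ := hMM.exists_mem_sgDeltaAt_of_notMem hxT
    rw [hτ, mem_sgDeltaAt_sub_iff] at htk
    exact hS.1.notMem_sgDeltaAt_sgTau (add_comm t α ▸ ht α hαM).1 k htk

/-- **Lemma.** Let `S` be a local symmetric good semigroup with maximal ideal
`M_S = S \ {0}`. If `M_S − M_S` is symmetric, then `α − μ_{M_S} ∈ S` for every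
`α ∈ M_S \ C_S`. -/
theorem stmt_10 {I : Type*} [Fintype I] [Nonempty I] (S : Set (I → ℤ))
    (hS : IsSymmetricSg S) (hloc : IsLocalSg S)
    (hMM : IsSymmetricSg (sgDiff (S \ {0}) (S \ {0}))) :
    ∀ α ∈ (S \ {0}) \ sgCond S, α - sgMu (S \ {0}) ∈ S :=
  stmt_10_general S hS hloc hMM
end
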